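/- With the same setup of a g-natural metric G on TM determined by functions a₁,a₂,a₃,b₁,b₂,b₃ and with a(t), Fⱼ(t), F(t) defined as before, the metric G is positive definite at every point of TM if and only if a(t) > 0, F(t) > 0, a₁(t) > 0 and F₁(t) > 0 for all t ∈ [0,∞). -/

import Mathlib

/-!
Write `t = ⟪u, u⟫` and split `h = h' + α • u`, `v = v' + β • u` with `h', v' ⊥ u`. Then
`G u (h, v) (h, v)` decouples into a form in `(h', v')` with coefficient matrix
`[[a₁ + a₃, a₂], [a₂, a₁]]` and `t` times a form in `(α, β)` with matrix
`[[F₁ + F₃, F₂], [F₂, F₁]]`.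
A form `p ⟪h, h⟫ + 2 q ⟪h, v⟫ + r ⟪v, v⟫` is positive definite exactly when `r > 0` and
`r p - q² > 0`, by completing the square, so `G` is positive definite iff both blocks are.
Testing the first block needs a nonzero vector orthogonal to `u`, whence `n ≥ 2`; at `t = 0`
the two blocks coincide.
-/

open scoped RealInnerProductSpace

section BinaryForm

variable {E : Type*} [NormedAddCommGroup E] [InnerProductSpace ℝ E]

def binaryForm (p q r : ℝ) (h v : E) : ℝ :=
  p * ⟪h, h⟫ + 2 * q * ⟪h, v⟫ + r * ⟪v, v⟫

lemma binaryForm_real (p q r α β : ℝ) :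
    binaryForm p q r α β = p * α ^ 2 + 2 * q * α * β + r * β ^ 2 := by
  simp only [binaryForm, RCLike.inner_apply, conj_trivial]
  ring

lemma binaryForm_smul_smul (p q r α β : ℝ) (e : E) :
    binaryForm p q r (α • e) (β • e) = binaryForm p q r α β * ⟪e, e⟫ := by
  rw [binaryForm_real]
  simp only [binaryForm, real_inner_smul_left, real_inner_smul_right]
  ring

lemma mul_binaryForm_eq (p q r : ℝ) (h v : E) :
    r * binaryForm p q r h v = ⟪q • h + r • v, q • h + r • v⟫ + (r * p - q ^ 2) * ⟪h, h⟫ := by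
  simp only [binaryForm, inner_add_left, inner_add_right, real_inner_smul_left,
    real_inner_smul_right, real_inner_comm h v]
  ring

variable {p q r : ℝ}

lemma binaryForm_pos (hr : 0 < r) (hdet : 0 < r * p - q ^ 2) {h v : E} (hhv : (h, v) ≠ 0) :
    0 < binaryForm p q r h v := by
  by_cases hh : h = 0
  · have hv : v ≠ 0 := by rintro rfl; exact hhv (by rw [hh]; rfl)
    simpa [binaryForm, hh] using mul_pos hr (real_inner_self_pos.2 hv)
  · refine pos_of_mul_pos_right ?_ hr.le
    rw [mul_binaryForm_eq]
    exact add_pos_of_nonneg_of_pos real_inner_self_nonneg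
      (mul_pos hdet (real_inner_self_pos.2 hh))

lemma binaryForm_nonneg (hr : 0 < r) (hdet : 0 < r * p - q ^ 2) (h v : E) :
    0 ≤ binaryForm p q r h v := by
  by_cases hhv : (h, v) = 0
  · obtain ⟨rfl, rfl⟩ := Prod.mk_eq_zero.1 hhv
    simp [binaryForm]
  · exact (binaryForm_pos hr hdet hhv).le

lemma pos_of_binaryForm_pos (hpos : ∀ α β : ℝ, (α, β) ≠ 0 → 0 < binaryForm p q r α β) :
    0 < r ∧ 0 < r * p - q ^ 2 := by
  have hr : 0 < r := by simpa [binaryForm_real] using hpos 0 1 (by simp)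
  have hdet : 0 < r * (r * p - q ^ 2) := by
    -- at `(r, -q)` the form takes the value `r * (r * p - q ^ 2)`
    have := hpos r (-q) (by simp [hr.ne'])
    rw [binaryForm_real] at this
    linarith
  exact ⟨hr, pos_of_mul_pos_right hdet hr.le⟩

end BinaryForm

section GNaturalForm

variable {E : Type*} [NormedAddCommGroup E] [InnerProductSpace ℝ E]

lemma exists_inner_eq_zero_eq_add_smul (u h : E) :
    ∃ (h' : E) (α : ℝ), ⟪h', u⟫ = 0 ∧ h = h' + α • u := by
  obtain ⟨y, hy, z, hz, rfl⟩ := (ℝ ∙ u).exists_add_mem_mem_orthogonal h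
  obtain ⟨α, rfl⟩ := Submodule.mem_span_singleton.1 hy
  refine ⟨z, α, ?_, add_comm _ _⟩
  rw [real_inner_comm]
  exact Submodule.mem_orthogonal_singleton_iff_inner_right.1 hz

lemma exists_inner_self_eq_and_inner_eq_zero [FiniteDimensional ℝ E]
    (hE : 2 ≤ Module.finrank ℝ E) {t : ℝ} (ht : 0 ≤ t) :
    ∃ u e : E, ⟪u, u⟫ = t ∧ e ≠ 0 ∧ ⟪e, u⟫ = 0 := by
  let b := stdOrthonormalBasis ℝ E
  let i : Fin (Module.finrank ℝ E) := ⟨0, by omega⟩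
  let j : Fin (Module.finrank ℝ E) := ⟨1, by omega⟩
  refine ⟨√t • b i, b j, ?_, b.orthonormal.ne_zero j, ?_⟩
  · rw [real_inner_smul_left, real_inner_smul_right, b.inner_eq_one, mul_one,
      Real.mul_self_sqrt ht]
  · rw [real_inner_smul_right, b.inner_eq_zero (by simp [i, j, Fin.ext_iff]), mul_zero]

variable (p q r p' q' r' : ℝ) (u : E)

/-- `G u (h, v) (h, v)` for the g-natural metric with `(p, q, r) = (a₁ + a₃, a₂, a₁)` and
`(p', q', r') = (b₁ + b₃, b₂, b₁)` evaluated at `⟪u, u⟫`. -/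
noncomputable def gNaturalForm (h v : E) : ℝ :=
  binaryForm p q r h v + binaryForm p' q' r' ⟪h, u⟫ ⟪v, u⟫

lemma gNaturalForm_add_smul {h' v' : E} (hh' : ⟪h', u⟫ = 0) (hv' : ⟪v', u⟫ = 0) (α β : ℝ) :
    gNaturalForm p q r p' q' r' u (h' + α • u) (v' + β • u) =
      binaryForm p q r h' v' + ⟪u, u⟫ *
        binaryForm (p + ⟪u, u⟫ * p') (q + ⟪u, u⟫ * q') (r + ⟪u, u⟫ * r') α β := by
  simp only [gNaturalForm, binaryForm_real]
  simp only [binaryForm, inner_add_left, inner_add_right,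
    real_inner_smul_left, real_inner_smul_right, real_inner_comm h' u, real_inner_comm v' u,
    real_inner_comm v' h', hh', hv']
  ring

lemma gNaturalForm_smul_smul (α β : ℝ) :
    gNaturalForm p q r p' q' r' u (α • u) (β • u) =
      ⟪u, u⟫ * binaryForm (p + ⟪u, u⟫ * p') (q + ⟪u, u⟫ * q') (r + ⟪u, u⟫ * r') α β := by
  simpa [binaryForm] using
    gNaturalForm_add_smul p q r p' q' r' u (inner_zero_left u) (inner_zero_left u) α β

lemma gNaturalForm_smul_smul_of_inner_eq_zero {e : E} (heu : ⟪e, u⟫ = 0) (α β : ℝ) :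
    gNaturalForm p q r p' q' r' u (α • e) (β • e) = binaryForm p q r α β * ⟪e, e⟫ := by
  rw [gNaturalForm, binaryForm_smul_smul, real_inner_smul_left, real_inner_smul_left, heu]
  simp [binaryForm]

variable {p q r p' q' r' u}

lemma gNaturalForm_pos (hr : 0 < r) (hdet : 0 < r * p - q ^ 2) (hr' : 0 < r + ⟪u, u⟫ * r')
    (hdet' : 0 < (r + ⟪u, u⟫ * r') * (p + ⟪u, u⟫ * p') - (q + ⟪u, u⟫ * q') ^ 2)
    {h v : E} (hhv : (h, v) ≠ 0) : 0 < gNaturalForm p q r p' q' r' u h v := by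
  obtain ⟨h', α, hh', rfl⟩ := exists_inner_eq_zero_eq_add_smul u h
  obtain ⟨v', β, hv', rfl⟩ := exists_inner_eq_zero_eq_add_smul u v
  rw [gNaturalForm_add_smul p q r p' q' r' u hh' hv']
  by_cases hhv' : (h', v') = 0
  · obtain ⟨rfl, rfl⟩ := Prod.mk_eq_zero.1 hhv'
    have hu : u ≠ 0 := by rintro rfl; simp at hhv
    have hαβ : (α, β) ≠ 0 := by
      rintro hαβ
      obtain ⟨rfl, rfl⟩ := Prod.mk_eq_zero.1 hαβ
      simp at hhv
    simpa [binaryForm] using mul_pos (real_inner_self_pos.2 hu) (binaryForm_pos hr' hdet' hαβ)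
  · exact add_pos_of_pos_of_nonneg (binaryForm_pos hr hdet hhv')
      (mul_nonneg real_inner_self_nonneg (binaryForm_nonneg hr' hdet' α β))

lemma pos_of_gNaturalForm_pos {e : E} (he : e ≠ 0) (heu : ⟪e, u⟫ = 0)
    (hpos : ∀ h v : E, (h, v) ≠ 0 → 0 < gNaturalForm p q r p' q' r' u h v) :
    (0 < r ∧ 0 < r * p - q ^ 2) ∧ (0 < r + ⟪u, u⟫ * r' ∧
      0 < (r + ⟪u, u⟫ * r') * (p + ⟪u, u⟫ * p') - (q + ⟪u, u⟫ * q') ^ 2) := by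
  have horth : 0 < r ∧ 0 < r * p - q ^ 2 := by
    refine pos_of_binaryForm_pos fun α β hαβ =>
      pos_of_mul_pos_left ?_ (real_inner_self_nonneg (x := e))
    rw [← gNaturalForm_smul_smul_of_inner_eq_zero p q r p' q' r' u heu]
    exact hpos _ _ (by simpa [he] using hαβ)
  refine ⟨horth, ?_⟩
  by_cases hu : u = 0
  · simpa [hu] using horth
  refine pos_of_binaryForm_pos fun α β hαβ =>
    pos_of_mul_pos_right ?_ (real_inner_self_nonneg (x := u))
  rw [← gNaturalForm_smul_smul]
  exact hpos _ _ (by simpa [hu] using hαβ)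

end GNaturalForm

/-- A g-natural metric `G` on `TM` (horizontal ⊕ vertical block form over an
`n`-dimensional inner product space, `n ≥ 2`) is positive definite at every point
`(x,u)` iff `a t > 0`, `F t > 0`, `a₁ t > 0`, `F₁ t > 0` for all `t ∈ [0,∞)`. -/
theorem g_natural_metric_positive_definite_iff
    (n : ℕ) (hn : 2 ≤ n)
    (a₁ a₂ a₃ b₁ b₂ b₃ : ℝ → ℝ)
    (a : ℝ → ℝ) (ha : ∀ t, a t = a₁ t * (a₁ t + a₃ t) - (a₂ t) ^ 2)
    (F₁ F₂ F₃ : ℝ → ℝ)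
    (hF₁ : ∀ t, F₁ t = a₁ t + t * b₁ t)
    (hF₂ : ∀ t, F₂ t = a₂ t + t * b₂ t)
    (hF₃ : ∀ t, F₃ t = a₃ t + t * b₃ t)
    (F : ℝ → ℝ) (hF : ∀ t, F t = F₁ t * (F₁ t + F₃ t) - (F₂ t) ^ 2)
    (G : EuclideanSpace ℝ (Fin n) →
         (EuclideanSpace ℝ (Fin n) × EuclideanSpace ℝ (Fin n)) →
         (EuclideanSpace ℝ (Fin n) × EuclideanSpace ℝ (Fin n)) → ℝ)
    (hG : ∀ (u : EuclideanSpace ℝ (Fin n)) Z W, G u Z W =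
      (a₁ ⟪u, u⟫ + a₃ ⟪u, u⟫) * ⟪Z.1, W.1⟫
      + (b₁ ⟪u, u⟫ + b₃ ⟪u, u⟫) * ⟪Z.1, u⟫ * ⟪W.1, u⟫
      + a₂ ⟪u, u⟫ * (⟪Z.1, W.2⟫ + ⟪Z.2, W.1⟫)
      + b₂ ⟪u, u⟫ * (⟪Z.1, u⟫ * ⟪W.2, u⟫ + ⟪Z.2, u⟫ * ⟪W.1, u⟫)
      + a₁ ⟪u, u⟫ * ⟪Z.2, W.2⟫ + b₁ ⟪u, u⟫ * ⟪Z.2, u⟫ * ⟪W.2, u⟫) :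
    (∀ (u : EuclideanSpace ℝ (Fin n)) Z, Z ≠ 0 → 0 < G u Z Z) ↔
      (∀ t, 0 ≤ t → 0 < a t ∧ 0 < F t ∧ 0 < a₁ t ∧ 0 < F₁ t) := by
  have hG_diag : ∀ u h v, G u (h, v) (h, v) = gNaturalForm (a₁ ⟪u, u⟫ + a₃ ⟪u, u⟫) (a₂ ⟪u, u⟫)
      (a₁ ⟪u, u⟫) (b₁ ⟪u, u⟫ + b₃ ⟪u, u⟫) (b₂ ⟪u, u⟫) (b₁ ⟪u, u⟫) u h v := by
    intro u h v
    rw [hG]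
    simp only [gNaturalForm, binaryForm_real]
    simp only [binaryForm, real_inner_comm h v]
    ring
  have hF_eq : ∀ t, F t = (F₁ t) * ((a₁ t + a₃ t) + t * (b₁ t + b₃ t)) - (F₂ t) ^ 2 := by
    intro t
    rw [hF, hF₁, hF₃]
    ring
  constructor
  · intro hpos t ht
    obtain ⟨u, e, rfl, he, heu⟩ := exists_inner_self_eq_and_inner_eq_zero
      (E := EuclideanSpace ℝ (Fin n)) (by rwa [finrank_euclideanSpace_fin]) ht
    obtain ⟨⟨h₁, hdet⟩, ⟨h₁', hdet'⟩⟩ := pos_of_gNaturalForm_pos he heu fun h v hhv =>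
      hG_diag u h v ▸ hpos u (h, v) hhv
    refine ⟨?_, ?_, h₁, ?_⟩
    · rw [ha]; linarith
    · rw [hF_eq, hF₁, hF₂]; linarith
    · rw [hF₁]; linarith
  · rintro hcoeff u ⟨h, v⟩ hZ
    obtain ⟨hat, hFt, h₁, hF₁t⟩ := hcoeff _ (real_inner_self_nonneg (x := u))
    rw [ha] at hat
    rw [hF_eq, hF₁, hF₂] at hFt
    rw [hF₁] at hF₁t
    rw [hG_diag]
    exact gNaturalForm_pos h₁ (by linarith) hF₁t (by linarith) hZ
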